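/- Consider the time-varying MPC setup: fix real matrices A (n×n), B (n×m), a horizon T ≥ 1, a real δ ∈ [0,1), and sequences (Q_t)_{t∈ℕ} of symmetric positive definite n×n matrices and (R_t)_{t∈ℕ} of symmetric positive definite m×m matrices satisfying (1−δ)Q_t ⪯ Q_{t+1} ⪯ (1+δ)Q_t and (1−δ)R_t ⪯ R_{t+1} ⪯ (1+δ)R_t for all t. For weights (Q,R) let P_k(Q,R) be the Riccati iterates with P_0 = 0 and P_{k+1} = AᵀP_kA − AᵀP_kB(BᵀP_kB+R)⁻¹BᵀP_kA + Q, and let the MPC closed-loop trajectory from x_0 be x_{t+1} = Ax_t + Bû_t with û_t = −(BᵀP_{T−1}(Q_t,R_t)B+R_t)⁻¹BᵀP_{T−1}(Q_t,R_t)A x_t. Suppose ρ ∈ (0,1) satisfies ρ·P_T(Q_t,R_t) ⪯ Q_t for all t, α > 1 satisfies P_T(Q_t,R_t) ⪯ α·P_{T−1}(Q_t,R_t) for all t, and that γ = (1−ρ)α/(1−δ) < 1. Then for every control sequence (u_t)_{t∈ℕ} in ℝᵐ with trajectory z_{t+1} = Az_t + Bu_t, z_0 = x_0, whose total cost series ∑_{t=0}^{∞}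 (z_tᵀQ_tz_t + u_tᵀR_tu_t) converges to a value S, the total realized MPC cost satisfies ∑_{t=0}^{∞} (x_tᵀQ_tx_t + û_tᵀR_tû_t) ≤ (ρ(1−δ)^{1−T}/(1−γ)) · S. In particular, the MPC policy is (1+ε_T)-suboptimal with 1+ε_T = ρ(1−δ)^{1−T}/(1−γ). -/

import Mathlib

open Matrix

/-- The finite-horizon Riccati iteration with `P 0 = 0` and
`P (k+1) = AᵀP_kA − AᵀP_kB(BᵀP_kB+R)⁻¹BᵀP_kA + Q`. -/
noncomputable def riccati {n m : ℕ} (A : Matrix (Fin n) (Fin n) ℝ)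
    (B : Matrix (Fin n) (Fin m) ℝ) (Q : Matrix (Fin n) (Fin n) ℝ)
    (R : Matrix (Fin m) (Fin m) ℝ) : ℕ → Matrix (Fin n) (Fin n) ℝ
  | 0 => 0
  | k + 1 =>
      Aᵀ * riccati A B Q R k * A -
        Aᵀ * riccati A B Q R k * B * (Bᵀ * riccati A B Q R k * B + R)⁻¹ *
          Bᵀ * riccati A B Q R k * A + Q

/-- The Loewner order on real square matrices: `X ⪯ Y` iff `Y − X` is positive semidefinite. -/
def loewnerLE {n : ℕ} (X Y : Matrix (Fin n) (Fin n) ℝ) : Prop := (Y - X).PosSemidef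

/-!
Along the MPC trajectory put `W t = x tᵀ P_T(Q_t, R_t) x t`. The MPC input is the minimiser of the
Riccati step from `P_{T-1}` to `P_T`, so `W t` is the stage cost plus
`x (t+1)ᵀ P_{T-1}(Q_t, R_t) x (t+1)`. Together with `ρ P_T ⪯ Q`, `P_T ⪯ α P_{T-1}` and the slow
variation of the weights (transported to `P_T` by monotonicity and homogeneity of the Riccati
iteration) this gives `cost t + K W (t+1) ≤ K W t` for `K = ρ / (1 - γ)`, so the total MPC cost is
at most `K W 0`. Conversely, over its first `T` steps any trajectory from `x 0` pays at least
`(1 - δ)^(T-1)` times its cost under the frozen weights `(Q_0, R_0)`, which is at least `W 0`.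
-/

namespace Matrix

variable {ι κ : Type*} [Fintype ι]

theorem IsSymm.dotProduct_mulVec_comm {P : Matrix ι ι ℝ} (hP : P.IsSymm) (v w : ι → ℝ) :
    v ⬝ᵥ (P *ᵥ w) = w ⬝ᵥ (P *ᵥ v) := by
  simpa only [hP.eq] using dotProduct_transpose_mulVec P v w

theorem PosSemidef.dotProduct_mulVec_self_nonneg {P : Matrix ι ι ℝ} (hP : P.PosSemidef)
    (y : ι → ℝ) : 0 ≤ y ⬝ᵥ (P *ᵥ y) :=
  hP.dotProduct_mulVec_nonneg y

theorem IsSymm.transpose_mul_mul {P : Matrix ι ι ℝ} (hP : P.IsSymm) (B : Matrix ι κ ℝ) :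
    (Bᵀ * P * B).IsSymm := by
  simp [IsSymm, transpose_mul, hP.eq, Matrix.mul_assoc]

theorem inv_smul_of_ne_zero [DecidableEq ι] {c : ℝ} (hc : c ≠ 0) (M : Matrix ι ι ℝ) :
    (c • M)⁻¹ = c⁻¹ • M⁻¹ := by
  by_cases hM : IsUnit M.det
  · exact inv_smul' M (Units.mk0 c hc) hM
  · have hcM : ¬IsUnit (c • M).det := by simpa [det_smul, hc] using hM
    rw [nonsing_inv_apply_not_isUnit _ hM, nonsing_inv_apply_not_isUnit _ hcM, smul_zero]

variable [Fintype κ]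

theorem quadratic_completion [DecidableEq κ] (A : Matrix ι ι ℝ) (B : Matrix ι κ ℝ)
    {P Q : Matrix ι ι ℝ} {R : Matrix κ κ ℝ} (hP : P.IsSymm) (hR : R.IsSymm)
    (hM : IsUnit (Bᵀ * P * B + R).det) (x : ι → ℝ) (u : κ → ℝ) :
    x ⬝ᵥ (Q *ᵥ x) + u ⬝ᵥ (R *ᵥ u) + (A *ᵥ x + B *ᵥ u) ⬝ᵥ (P *ᵥ (A *ᵥ x + B *ᵥ u)) =
      x ⬝ᵥ ((Aᵀ * P * A - Aᵀ * P * B * (Bᵀ * P * B + R)⁻¹ * Bᵀ * P * A + Q) *ᵥ x) +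
        (u + ((Bᵀ * P * B + R)⁻¹ * Bᵀ * P * A) *ᵥ x) ⬝ᵥ
          ((Bᵀ * P * B + R) *ᵥ (u + ((Bᵀ * P * B + R)⁻¹ * Bᵀ * P * A) *ᵥ x)) := by
  set M := Bᵀ * P * B + R with hMdef
  have hMs : M.IsSymm := (hP.transpose_mul_mul B).add hR
  set s := Bᵀ *ᵥ (P *ᵥ (A *ᵥ x))
  set c := M⁻¹ *ᵥ s
  have hG : (M⁻¹ * Bᵀ * P * A) *ᵥ x = c := by
    simp only [c, s, mulVec_mulVec, Matrix.mul_assoc]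
  have hMc : M *ᵥ c = s := by rw [mulVec_mulVec, mul_nonsing_inv _ hM, one_mulVec]
  have hsc : x ⬝ᵥ ((Aᵀ * P * B * M⁻¹ * Bᵀ * P * A) *ᵥ x) = c ⬝ᵥ s := by
    have h : (Aᵀ * P * B * M⁻¹ * Bᵀ * P * A) *ᵥ x = Aᵀ *ᵥ (P *ᵥ (B *ᵥ c)) := by
      simp only [c, s, mulVec_mulVec, Matrix.mul_assoc]
    rw [h, dotProduct_transpose_mulVec, dotProduct_transpose_mulVec, dotProduct_comm,
      hP.dotProduct_mulVec_comm, dotProduct_comm]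
  have hus : u ⬝ᵥ s = (B *ᵥ u) ⬝ᵥ (P *ᵥ (A *ᵥ x)) :=
    (dotProduct_transpose_mulVec _ _ _).trans (dotProduct_comm _ _)
  have hAPA : x ⬝ᵥ ((Aᵀ * P * A) *ᵥ x) = (A *ᵥ x) ⬝ᵥ (P *ᵥ (A *ᵥ x)) := by
    rw [← mulVec_mulVec, ← mulVec_mulVec, dotProduct_transpose_mulVec, dotProduct_comm]
  have hBPB : u ⬝ᵥ ((Bᵀ * P * B) *ᵥ u) = (B *ᵥ u) ⬝ᵥ (P *ᵥ (B *ᵥ u)) := by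
    rw [← mulVec_mulVec, ← mulVec_mulVec, dotProduct_transpose_mulVec, dotProduct_comm]
  have hcMu : c ⬝ᵥ (M *ᵥ u) = u ⬝ᵥ s := by rw [hMs.dotProduct_mulVec_comm, hMc]
  have hAB := hP.dotProduct_mulVec_comm (A *ᵥ x) (B *ᵥ u)
  rw [hG, add_mulVec, sub_mulVec, dotProduct_add, dotProduct_sub, hsc, hAPA]
  simp only [mulVec_add, dotProduct_add, add_dotProduct, hMc, hcMu]
  rw [hMdef, add_mulVec, dotProduct_add, hBPB]
  linarith

end Matrix

theorem loewnerLE.dotProduct_mulVec_le {n : ℕ} {X Y : Matrix (Fin n) (Fin n) ℝ}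
    (h : loewnerLE X Y) (y : Fin n → ℝ) : y ⬝ᵥ (X *ᵥ y) ≤ y ⬝ᵥ (Y *ᵥ y) := by
  have := h.dotProduct_mulVec_self_nonneg y
  simp only [sub_mulVec, dotProduct_sub] at this
  linarith

theorem loewnerLE_of_dotProduct_mulVec_le {n : ℕ} {X Y : Matrix (Fin n) (Fin n) ℝ}
    (hX : X.IsSymm) (hY : Y.IsSymm) (h : ∀ y, y ⬝ᵥ (X *ᵥ y) ≤ y ⬝ᵥ (Y *ᵥ y)) :
    loewnerLE X Y := by
  refine .of_dotProduct_mulVec_nonneg (isHermitian_iff_isSymm.2 (hY.sub hX)) fun y => ?_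
  simpa [sub_mulVec, dotProduct_sub] using h y

theorem pow_mul_dotProduct_mulVec_le {n : ℕ} {c : ℝ} (hc : 0 ≤ c)
    {M : ℕ → Matrix (Fin n) (Fin n) ℝ} (hM : ∀ t, loewnerLE (c • M t) (M (t + 1)))
    (t : ℕ) (y : Fin n → ℝ) : c ^ t * (y ⬝ᵥ (M 0 *ᵥ y)) ≤ y ⬝ᵥ (M t *ᵥ y) := by
  induction t with
  | zero => simp
  | succ t ih =>
    calc c ^ (t + 1) * (y ⬝ᵥ (M 0 *ᵥ y)) = c * (c ^ t * (y ⬝ᵥ (M 0 *ᵥ y))) := by ring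
      _ ≤ c * (y ⬝ᵥ (M t *ᵥ y)) := mul_le_mul_of_nonneg_left ih hc
      _ = y ⬝ᵥ ((c • M t) *ᵥ y) := by rw [smul_mulVec, dotProduct_smul, smul_eq_mul]
      _ ≤ y ⬝ᵥ (M (t + 1) *ᵥ y) := (hM t).dotProduct_mulVec_le y

section Riccati

variable {n m : ℕ} (A : Matrix (Fin n) (Fin n) ℝ) (B : Matrix (Fin n) (Fin m) ℝ)
  {Q Q' : Matrix (Fin n) (Fin n) ℝ} {R R' : Matrix (Fin m) (Fin m) ℝ}

noncomputable def riccatiGain (Q : Matrix (Fin n) (Fin n) ℝ) (R : Matrix (Fin m) (Fin m) ℝ)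
    (k : ℕ) : Matrix (Fin m) (Fin n) ℝ :=
  (Bᵀ * riccati A B Q R k * B + R)⁻¹ * Bᵀ * riccati A B Q R k * A

theorem riccati_isSymm (hQ : Q.IsSymm) (hR : R.IsSymm) (k : ℕ) :
    (riccati A B Q R k).IsSymm := by
  induction k with
  | zero => exact isSymm_zero
  | succ k ih =>
    have hM : (Bᵀ * (riccati A B Q R k * B) + R)⁻¹ᵀ =
        (Bᵀ * (riccati A B Q R k * B) + R)⁻¹ := by
      rw [transpose_nonsing_inv, ← Matrix.mul_assoc, ((ih.transpose_mul_mul B).add hR).eq]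
    simp only [riccati, IsSymm, transpose_add, transpose_sub, transpose_mul, transpose_transpose,
      hM, ih.eq, hQ.eq, Matrix.mul_assoc]

theorem riccati_succ_completion (hR : R.PosDef) {k : ℕ}
    (hP : (riccati A B Q R k).PosSemidef) (x : Fin n → ℝ) (u : Fin m → ℝ) :
    x ⬝ᵥ (Q *ᵥ x) + u ⬝ᵥ (R *ᵥ u) +
        (A *ᵥ x + B *ᵥ u) ⬝ᵥ (riccati A B Q R k *ᵥ (A *ᵥ x + B *ᵥ u)) =
      x ⬝ᵥ (riccati A B Q R (k + 1) *ᵥ x) +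
        (u + riccatiGain A B Q R k *ᵥ x) ⬝ᵥ
          ((Bᵀ * riccati A B Q R k * B + R) *ᵥ (u + riccatiGain A B Q R k *ᵥ x)) := by
  have hM : (Bᵀ * riccati A B Q R k * B + R).PosDef := by
    simpa using PosDef.posSemidef_add (hP.conjTranspose_mul_mul_same B) hR
  exact quadratic_completion A B (isHermitian_iff_isSymm.1 hP.isHermitian)
    (isHermitian_iff_isSymm.1 hR.isHermitian) ((isUnit_iff_isUnit_det _).1 hM.isUnit) x u

theorem riccati_posSemidef (hQ : Q.PosSemidef) (hR : R.PosDef) (k : ℕ) :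
    (riccati A B Q R k).PosSemidef := by
  induction k with
  | zero => exact .zero
  | succ k ih =>
    refine .of_dotProduct_mulVec_nonneg (isHermitian_iff_isSymm.2 (riccati_isSymm A B
      (isHermitian_iff_isSymm.1 hQ.isHermitian) (isHermitian_iff_isSymm.1 hR.isHermitian) _))
      fun x => ?_
    have h := riccati_succ_completion A B hR ih x (-(riccatiGain A B Q R k *ᵥ x))
    rw [neg_add_cancel, zero_dotProduct, add_zero] at h
    have := hQ.dotProduct_mulVec_self_nonneg x
    have := hR.posSemidef.dotProduct_mulVec_self_nonneg (-(riccatiGain A B Q R k *ᵥ x))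
    have := ih.dotProduct_mulVec_self_nonneg (A *ᵥ x + B *ᵥ -(riccatiGain A B Q R k *ᵥ x))
    change 0 ≤ x ⬝ᵥ _
    linarith

theorem riccati_succ_le (hQ : Q.PosSemidef) (hR : R.PosDef) (k : ℕ) (x : Fin n → ℝ)
    (u : Fin m → ℝ) :
    x ⬝ᵥ (riccati A B Q R (k + 1) *ᵥ x) ≤ x ⬝ᵥ (Q *ᵥ x) + u ⬝ᵥ (R *ᵥ u) +
      (A *ᵥ x + B *ᵥ u) ⬝ᵥ (riccati A B Q R k *ᵥ (A *ᵥ x + B *ᵥ u)) := by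
  have hP := riccati_posSemidef A B hQ hR k
  rw [riccati_succ_completion A B hR hP]
  have hM : (Bᵀ * riccati A B Q R k * B + R).PosSemidef := by
    simpa using (hP.conjTranspose_mul_mul_same B).add hR.posSemidef
  exact le_add_of_nonneg_right (hM.dotProduct_mulVec_self_nonneg _)

theorem riccati_succ_eq (hQ : Q.PosSemidef) (hR : R.PosDef) (k : ℕ) (x : Fin n → ℝ) :
    x ⬝ᵥ (riccati A B Q R (k + 1) *ᵥ x) =
      x ⬝ᵥ (Q *ᵥ x) +
        (-(riccatiGain A B Q R k *ᵥ x)) ⬝ᵥ (R *ᵥ -(riccatiGain A B Q R k *ᵥ x)) +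
        (A *ᵥ x + B *ᵥ -(riccatiGain A B Q R k *ᵥ x)) ⬝ᵥ
          (riccati A B Q R k *ᵥ (A *ᵥ x + B *ᵥ -(riccatiGain A B Q R k *ᵥ x))) := by
  rw [riccati_succ_completion A B hR (riccati_posSemidef A B hQ hR k)]
  simp

theorem riccati_mono (hQ : Q.PosSemidef) (hR : R.PosDef) (hQQ' : loewnerLE Q Q')
    (hRR' : loewnerLE R R') (k : ℕ) : loewnerLE (riccati A B Q R k) (riccati A B Q' R' k) := by
  have hQ' : Q'.PosSemidef := by simpa using hQ.add hQQ'
  have hR' : R'.PosDef := by simpa using hR.add_posSemidef hRR'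
  have hsymm {Q : Matrix (Fin n) (Fin n) ℝ} {R : Matrix (Fin m) (Fin m) ℝ} (hQ : Q.PosSemidef)
      (hR : R.PosDef) (k : ℕ) : (riccati A B Q R k).IsSymm :=
    isHermitian_iff_isSymm.1 (riccati_posSemidef A B hQ hR k).isHermitian
  induction k with
  | zero => simpa [loewnerLE, riccati] using PosSemidef.zero
  | succ k ih =>
    refine loewnerLE_of_dotProduct_mulVec_le (hsymm hQ hR _) (hsymm hQ' hR' _) fun x => ?_
    set u := -(riccatiGain A B Q' R' k *ᵥ x)
    rw [riccati_succ_eq A B hQ' hR']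
    have := riccati_succ_le A B hQ hR k x u
    have := hQQ'.dotProduct_mulVec_le x
    have := hRR'.dotProduct_mulVec_le u
    have := ih.dotProduct_mulVec_le (A *ᵥ x + B *ᵥ u)
    linarith

theorem riccati_smul {c : ℝ} (hc : c ≠ 0) (k : ℕ) :
    riccati A B (c • Q) (c • R) k = c • riccati A B Q R k := by
  induction k with
  | zero => simp [riccati]
  | succ k ih =>
    have hM : Bᵀ * (c • riccati A B Q R k) * B + c • R =
        c • (Bᵀ * riccati A B Q R k * B + R) := by
      simp only [Matrix.mul_smul, Matrix.smul_mul, smul_add]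
    rw [riccati, riccati, ih, hM, inv_smul_of_ne_zero hc]
    simp only [Matrix.mul_smul, Matrix.smul_mul, smul_smul, smul_sub, smul_add]
    field_simp

theorem riccati_le_sum_range (hQ : Q.PosSemidef) (hR : R.PosDef) (k : ℕ)
    {z : ℕ → Fin n → ℝ} {v : ℕ → Fin m → ℝ} (hz : ∀ t, z (t + 1) = A *ᵥ z t + B *ᵥ v t) :
    z 0 ⬝ᵥ (riccati A B Q R k *ᵥ z 0) ≤
      ∑ t ∈ Finset.range k, (z t ⬝ᵥ (Q *ᵥ z t) + v t ⬝ᵥ (R *ᵥ v t)) := by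
  induction k generalizing z v with
  | zero => simp [riccati]
  | succ k ih =>
    rw [Finset.sum_range_succ']
    have := ih (z := fun t => z (t + 1)) (v := fun t => v (t + 1)) fun t => hz (t + 1)
    have := riccati_succ_le A B hQ hR k (z 0) (v 0)
    rw [← hz 0] at this
    linarith

end Riccati

theorem add_div_mul_le_div_mul_of_contraction {ρ γ l c w w' : ℝ} (hρ0 : 0 ≤ ρ) (hρ1 : ρ < 1)
    (hl : 1 ≤ l) (hγ : l * (1 - ρ) ≤ γ) (hγ1 : γ < 1) (hc : ρ * w ≤ c) (hcw : c ≤ w)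
    (hw' : w' ≤ l * (w - c)) : c + ρ / (1 - γ) * w' ≤ ρ / (1 - γ) * w := by
  set K := ρ / (1 - γ)
  have hK : K * (1 - γ) = ρ := div_mul_cancel₀ ρ (by linarith)
  have hK0 : 0 ≤ K := div_nonneg hρ0 (by linarith)
  have hK1 : 1 ≤ K := by rw [one_le_div (by linarith)]; nlinarith
  have hw : 0 ≤ w := by nlinarith
  calc c + K * w' ≤ c + K * (l * (w - c)) := by gcongr
    _ ≤ K * w := by
      -- the middle expression is affine in `c ∈ [ρ w, w]`; check both endpoints
      rcases le_total 1 (K * l) with h | h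
      · nlinarith [mul_nonneg (sub_nonneg.2 h) (sub_nonneg.2 hc),
          mul_nonneg (mul_nonneg hK0 (sub_nonneg.2 hγ)) hw]
      · nlinarith [mul_nonneg (sub_nonneg.2 h) (sub_nonneg.2 hcw),
          mul_nonneg (sub_nonneg.2 hK1) hw]

theorem summable_and_tsum_le_of_add_le {c V : ℕ → ℝ} (hc : ∀ t, 0 ≤ c t) (hV : ∀ t, 0 ≤ V t)
    (h : ∀ t, c t + V (t + 1) ≤ V t) : Summable c ∧ ∑' t, c t ≤ V 0 := by
  have htel : ∀ N, ∑ t ∈ Finset.range N, c t + V N ≤ V 0 := by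
    intro N
    induction N with
    | zero => simp
    | succ N ih => rw [Finset.sum_range_succ]; linarith [h N]
  have hb : ∀ N, ∑ t ∈ Finset.range N, c t ≤ V 0 := fun N => by linarith [htel N, hV N]
  exact ⟨summable_of_sum_range_le hc hb, Real.tsum_le_of_sum_range_le hc hb⟩

section MPC

variable {n m : ℕ} (A : Matrix (Fin n) (Fin n) ℝ) (B : Matrix (Fin n) (Fin m) ℝ)

theorem pow_mul_riccati_le_of_hasSum {c : ℝ} (hc0 : 0 ≤ c) (hc1 : c ≤ 1)
    {Q : ℕ → Matrix (Fin n) (Fin n) ℝ} {R : ℕ → Matrix (Fin m) (Fin m) ℝ}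
    (hQ : ∀ t, (Q t).PosSemidef) (hR : ∀ t, (R t).PosDef)
    (hQc : ∀ t, loewnerLE (c • Q t) (Q (t + 1))) (hRc : ∀ t, loewnerLE (c • R t) (R (t + 1)))
    (k : ℕ) {z : ℕ → Fin n → ℝ} {v : ℕ → Fin m → ℝ} {S : ℝ}
    (hz : ∀ t, z (t + 1) = A *ᵥ z t + B *ᵥ v t)
    (hS : HasSum (fun t => z t ⬝ᵥ (Q t *ᵥ z t) + v t ⬝ᵥ (R t *ᵥ v t)) S) :
    c ^ k * (z 0 ⬝ᵥ (riccati A B (Q 0) (R 0) (k + 1) *ᵥ z 0)) ≤ S := by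
  have hterm : ∀ t ∈ Finset.range (k + 1),
      c ^ k * (z t ⬝ᵥ (Q 0 *ᵥ z t) + v t ⬝ᵥ (R 0 *ᵥ v t)) ≤
        z t ⬝ᵥ (Q t *ᵥ z t) + v t ⬝ᵥ (R t *ᵥ v t) := by
    intro t ht
    have hpow : c ^ k ≤ c ^ t :=
      pow_le_pow_of_le_one hc0 hc1 (Nat.lt_succ_iff.1 (Finset.mem_range.1 ht))
    have := pow_mul_dotProduct_mulVec_le hc0 hQc t (z t)
    have := pow_mul_dotProduct_mulVec_le hc0 hRc t (v t)
    have := (hQ 0).dotProduct_mulVec_self_nonneg (z t)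
    have := (hR 0).posSemidef.dotProduct_mulVec_self_nonneg (v t)
    nlinarith
  calc c ^ k * (z 0 ⬝ᵥ (riccati A B (Q 0) (R 0) (k + 1) *ᵥ z 0))
      ≤ c ^ k * ∑ t ∈ Finset.range (k + 1), (z t ⬝ᵥ (Q 0 *ᵥ z t) + v t ⬝ᵥ (R 0 *ᵥ v t)) := by
        gcongr; exact riccati_le_sum_range A B (hQ 0) (hR 0) _ hz
    _ ≤ ∑ t ∈ Finset.range (k + 1), (z t ⬝ᵥ (Q t *ᵥ z t) + v t ⬝ᵥ (R t *ᵥ v t)) := by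
        rw [Finset.mul_sum]; exact Finset.sum_le_sum hterm
    _ ≤ S := sum_le_hasSum _ (fun t _ => add_nonneg ((hQ t).dotProduct_mulVec_self_nonneg _)
        ((hR t).posSemidef.dotProduct_mulVec_self_nonneg _)) hS

theorem mpc_stage_cost_add_le {Q Q' : Matrix (Fin n) (Fin n) ℝ}
    {R R' : Matrix (Fin m) (Fin m) ℝ} {k : ℕ} {δ ρ α γ : ℝ} (hδ0 : 0 ≤ δ) (hδ1 : δ < 1)
    (hρ0 : 0 ≤ ρ) (hρ1 : ρ < 1) (hα : 1 ≤ α) (hγ : γ = (1 - ρ) * α / (1 - δ)) (hγ1 : γ < 1)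
    (hQ : Q.PosSemidef) (hR : R.PosDef) (hQ' : Q'.PosSemidef) (hR' : R'.PosDef)
    (hQQ' : loewnerLE Q' ((1 + δ) • Q)) (hRR' : loewnerLE R' ((1 + δ) • R))
    (hρP : loewnerLE (ρ • riccati A B Q R (k + 1)) Q)
    (hαP : loewnerLE (riccati A B Q R (k + 1)) (α • riccati A B Q R k))
    {x x' : Fin n → ℝ} {u : Fin m → ℝ} (hu : u = -(riccatiGain A B Q R k *ᵥ x))
    (hx' : x' = A *ᵥ x + B *ᵥ u) :
    x ⬝ᵥ (Q *ᵥ x) + u ⬝ᵥ (R *ᵥ u) +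
        ρ / (1 - γ) * (x' ⬝ᵥ (riccati A B Q' R' (k + 1) *ᵥ x')) ≤
      ρ / (1 - γ) * (x ⬝ᵥ (riccati A B Q R (k + 1) *ᵥ x)) := by
  have hbellman := riccati_succ_eq A B hQ hR k x
  rw [← hu, ← hx'] at hbellman
  have hρx := hρP.dotProduct_mulVec_le x
  have hαx' := hαP.dotProduct_mulVec_le x'
  have hδx' := (riccati_mono A B hQ' hR' hQQ' hRR' (k + 1)).dotProduct_mulVec_le x'
  rw [riccati_smul A B (by linarith) (k + 1)] at hδx'
  simp only [smul_mulVec, dotProduct_smul, smul_eq_mul] at hρx hαx' hδx'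
  have hu0 := hR.posSemidef.dotProduct_mulVec_self_nonneg u
  have hx'0 := (riccati_posSemidef A B hQ hR k).dotProduct_mulVec_self_nonneg x'
  refine add_div_mul_le_div_mul_of_contraction (l := (1 + δ) * α) hρ0 hρ1
    (one_le_mul_of_one_le_of_one_le (by linarith) hα) ?_ hγ1 (by linarith) (by linarith) ?_
  · rw [hγ, le_div_iff₀ (by linarith)]
    have := mul_nonneg (sub_nonneg.2 hρ1.le) (zero_le_one.trans hα)
    nlinarith [mul_nonneg (sq_nonneg δ) this]
  · calc x' ⬝ᵥ (riccati A B Q' R' (k + 1) *ᵥ x')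
        ≤ (1 + δ) * (x' ⬝ᵥ (riccati A B Q R (k + 1) *ᵥ x')) := hδx'
      _ ≤ (1 + δ) * (α * (x' ⬝ᵥ (riccati A B Q R k *ᵥ x'))) := by gcongr
      _ = _ := by rw [hbellman]; ring

end MPC

/-- ε-efficiency of the MPC policy (eq. (14) in the paper): the total realized MPC cost is
within the factor `1 + ε_T = ρ(1−δ)^{1−T}/(1−γ)` of the cost of any admissible control
sequence with convergent total cost. -/
theorem mpc_eps_efficient {n m : ℕ}
    (A : Matrix (Fin n) (Fin n) ℝ) (B : Matrix (Fin n) (Fin m) ℝ)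
    (T : ℕ) (hT : 1 ≤ T) (δ : ℝ) (hδ0 : 0 ≤ δ) (hδ1 : δ < 1)
    (Q : ℕ → Matrix (Fin n) (Fin n) ℝ) (R : ℕ → Matrix (Fin m) (Fin m) ℝ)
    (hQpd : ∀ t, (Q t).PosDef) (hRpd : ∀ t, (R t).PosDef)
    (hQlow : ∀ t, loewnerLE ((1 - δ) • Q t) (Q (t + 1)))
    (hQhigh : ∀ t, loewnerLE (Q (t + 1)) ((1 + δ) • Q t))
    (hRlow : ∀ t, loewnerLE ((1 - δ) • R t) (R (t + 1)))
    (hRhigh : ∀ t, loewnerLE (R (t + 1)) ((1 + δ) • R t))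
    (x : ℕ → Fin n → ℝ) (u : ℕ → Fin m → ℝ)
    (hu : ∀ t, u t = -(((Bᵀ * riccati A B (Q t) (R t) (T - 1) * B + R t)⁻¹ *
        Bᵀ * riccati A B (Q t) (R t) (T - 1) * A) *ᵥ x t))
    (hx : ∀ t, x (t + 1) = A *ᵥ x t + B *ᵥ u t)
    (ρ : ℝ) (hρ0 : 0 < ρ) (hρ1 : ρ < 1)
    (hρP : ∀ t, loewnerLE (ρ • riccati A B (Q t) (R t) T) (Q t))
    (α : ℝ) (hα : 1 < α)
    (hαP : ∀ t, loewnerLE (riccati A B (Q t) (R t) T)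
      (α • riccati A B (Q t) (R t) (T - 1)))
    (γ : ℝ) (hγ : γ = (1 - ρ) * α / (1 - δ)) (hγ1 : γ < 1) :
    ∀ (z : ℕ → Fin n → ℝ) (v : ℕ → Fin m → ℝ) (S : ℝ),
      z 0 = x 0 →
      (∀ t, z (t + 1) = A *ᵥ z t + B *ᵥ v t) →
      HasSum (fun t : ℕ => z t ⬝ᵥ (Q t *ᵥ z t) + v t ⬝ᵥ (R t *ᵥ v t)) S →
      Summable (fun t : ℕ => x t ⬝ᵥ (Q t *ᵥ x t) + u t ⬝ᵥ (R t *ᵥ u t)) ∧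
      ∑' t : ℕ, (x t ⬝ᵥ (Q t *ᵥ x t) + u t ⬝ᵥ (R t *ᵥ u t)) ≤
        ρ * (1 - δ) ^ (1 - (T : ℤ)) / (1 - γ) * S := by
  intro z v S hz0 hz hS
  obtain ⟨k, rfl⟩ : ∃ k, T = k + 1 := ⟨T - 1, by omega⟩
  simp only [Nat.add_sub_cancel] at hu hαP
  have hQ t := (hQpd t).posSemidef
  have hK : 0 ≤ ρ / (1 - γ) := div_nonneg hρ0.le (by linarith)
  obtain ⟨hsum, hle⟩ := summable_and_tsum_le_of_add_le
    (V := fun t => ρ / (1 - γ) * (x t ⬝ᵥ (riccati A B (Q t) (R t) (k + 1) *ᵥ x t)))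
    (fun t => add_nonneg ((hQ t).dotProduct_mulVec_self_nonneg _)
      ((hRpd t).posSemidef.dotProduct_mulVec_self_nonneg _))
    (fun t => mul_nonneg hK
      ((riccati_posSemidef A B (hQ t) (hRpd t) _).dotProduct_mulVec_self_nonneg _))
    (fun t => mpc_stage_cost_add_le A B hδ0 hδ1 hρ0.le hρ1 hα.le hγ hγ1 (hQ t) (hRpd t)
      (hQ (t + 1)) (hRpd (t + 1)) (hQhigh t) (hRhigh t) (hρP t) (hαP t) (hu t) (hx t))
  have hcost := pow_mul_riccati_le_of_hasSum A B (by linarith) (by linarith) hQ hRpd hQlow hRlow k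
    hz hS
  rw [hz0] at hcost
  have hpow : (1 - δ) ^ (1 - ((k + 1 : ℕ) : ℤ)) = ((1 - δ) ^ k)⁻¹ := by
    push_cast
    rw [show (1 : ℤ) - (k + 1) = -k by ring, _root_.zpow_neg, zpow_natCast]
  refine ⟨hsum, hle.trans ?_⟩
  calc ρ / (1 - γ) * (x 0 ⬝ᵥ (riccati A B (Q 0) (R 0) (k + 1) *ᵥ x 0))
      ≤ ρ / (1 - γ) * (((1 - δ) ^ k)⁻¹ * S) := by
        gcongr; rwa [le_inv_mul_iff₀ (pow_pos (by linarith) k)]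
    _ = ρ * (1 - δ) ^ (1 - ((k + 1 : ℕ) : ℤ)) / (1 - γ) * S := by rw [hpow]; ring
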